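/- arXiv:0911.3374 — 3 statements merged into one kernel-verified Lean document; each statement's English description precedes it below -/
import Mathlib

section
/- Let f : ℤ → ℝ be a function and let a ∈ ℤ. Let μ > 0 be non-integer with m − 1 < μ < m, where m = ⌈μ⌉. Then for all t ∈ ℤ with t ≥ a + m, the discrete backward fractional Taylor formula holds: f(t) = Σ_{k=0}^{m−1} ((t−a)^{↑k} / k!) · ∇^k f(a) + (1/Γ(μ)) · Σ_{τ=a+1}^{t} (t−τ+1)^{↑(μ−1)} · ∇_{(a+1)*}^{μ} f(τ). -/
/-!
The kernel of the `ν`-th fractional sum is `(j + 1)^{↑(ν-1)} / Γ(ν) = multichoose ν j`, the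
`j`-th coefficient of `(1 - x)^{-ν}`. Chu–Vandermonde for `multichoose` is then the identity
`(1 - x)^{-μ} (1 - x)^{-ν} = (1 - x)^{-(μ+ν)}`, i.e. fractional sums compose additively in the
order. Hence the Caputo remainder `∇^{-μ} ∇^{-(m-μ)} ∇^m f` is the `m`-fold sum of `∇^m f`, and
the formula reduces to the integer-order Taylor formula, proved by induction on `m`: write
`∇^m f(s) = ∇^m f(a) + ∇^{-1} ∇^{m+1} f(s)` and sum the constant `m` times.
-/

open Finset

/-- Backward (nabla) difference: `∇f(t) = f(t) - f(t-1)`. -/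
def nabla (f : ℤ → ℝ) : ℤ → ℝ := fun t => f t - f (t - 1)

/-- Rising factorial `t^{↑α} = Γ(t+α)/Γ(t)`. -/
noncomputable def risingFac (t α : ℝ) : ℝ := Real.Gamma (t + α) / Real.Gamma t

/-- The `ν`-th order nabla fractional sum `∇_a^{-ν} f (t) = Σ_{s=a}^{t} (t-s+1)^{↑(ν-1)}/Γ(ν) · f(s)`. -/
noncomputable def fracSum (ν : ℝ) (a : ℤ) (f : ℤ → ℝ) : ℤ → ℝ := fun t =>
  ∑ s ∈ Finset.Icc a t, risingFac ((t - s + 1 : ℤ) : ℝ) (ν - 1) / Real.Gamma ν * f s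

/-- Caputo-like nabla fractional difference `∇_{a*}^{μ} f = ∇_a^{-(m-μ)} (∇^m f)`, `m = ⌈μ⌉`. -/
noncomputable def caputoNabla (μ : ℝ) (a : ℤ) (f : ℤ → ℝ) : ℤ → ℝ :=
  fracSum ((⌈μ⌉₊ : ℝ) - μ) a (nabla^[⌈μ⌉₊] f)

open scoped Nat

/-- Chu–Vandermonde for `choose` at `-r, -s`, since `choose (-r) n = (-1)^n • multichoose r n`. -/
theorem Ring.multichoose_add {R : Type*} [CommRing R] [BinomialRing R] (r s : R) (k : ℕ) :
    Ring.multichoose (r + s) k =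
      ∑ ij ∈ antidiagonal k, Ring.multichoose r ij.1 * Ring.multichoose s ij.2 := by
  have h := Ring.add_choose_eq k (Commute.all (-r) (-s))
  simp only [← neg_add, Ring.choose_neg', Units.smul_def, zsmul_eq_mul,
    Int.cast_negOnePow_natCast] at h
  rw [sum_congr rfl fun ij hij => by
    rw [mul_mul_mul_comm, ← pow_add, mem_antidiagonal.mp hij], ← mul_sum] at h
  exact ((isUnit_neg_one (α := R)).pow k).mul_right_inj.mp h

theorem Real.Gamma_add_nat_eq_ascPochhammer {x : ℝ} (hx : 0 < x) (n : ℕ) :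
    Real.Gamma (x + n) = (ascPochhammer ℝ n).eval x * Real.Gamma x := by
  induction n with
  | zero => simp
  | succ n ih =>
    rw [Nat.cast_succ, ← add_assoc, Real.Gamma_add_one (by positivity), ih,
      ascPochhammer_succ_eval]
    ring

theorem Real.Gamma_add_nat {x : ℝ} (hx : 0 < x) (n : ℕ) :
    Real.Gamma (x + n) = n ! * Ring.multichoose x n * Real.Gamma x := by
  rw [Real.Gamma_add_nat_eq_ascPochhammer hx, ← nsmul_eq_mul,
    Ring.factorial_nsmul_multichoose_eq_ascPochhammer, Polynomial.ascPochhammer_smeval_eq_eval]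

theorem risingFac_natCast_add_one {ν : ℝ} (hν : 0 < ν) (n : ℕ) :
    risingFac (n + 1) (ν - 1) = Real.Gamma ν * Ring.multichoose ν n := by
  have hfac : (n ! : ℝ) ≠ 0 := by positivity
  rw [risingFac, show (n : ℝ) + 1 + (ν - 1) = ν + n by ring, Real.Gamma_add_nat hν,
    Real.Gamma_nat_eq_factorial]
  field_simp

theorem risingFac_zero_right {x : ℝ} (hx : 0 < x) : risingFac x 0 = 1 := by
  rw [risingFac, add_zero, div_self (Real.Gamma_pos_of_pos hx).ne']

theorem Int.sum_Icc_eq_sum_range {M : Type*} [AddCommMonoid M] (a t : ℤ) (F : ℤ → M) :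
    ∑ s ∈ Icc a t, F s = ∑ j ∈ Finset.range (t + 1 - a).toNat, F (t - j) := by
  refine sum_nbij' (fun s => (t - s).toNat) (fun j => t - j) ?_ ?_ ?_ ?_ ?_ <;>
    intro x hx <;> simp only [mem_Icc, mem_range] at hx ⊢
  all_goals first
    | omega
    | (congr 1; omega)

section FracSum

variable {ν : ℝ} {a : ℤ}

theorem fracSum_eq_sum_range (hν : 0 < ν) (g : ℤ → ℝ) (t : ℤ) :
    fracSum ν a g t = ∑ j ∈ range (t + 1 - a).toNat, Ring.multichoose ν j * g (t - j) := by
  rw [fracSum, Int.sum_Icc_eq_sum_range]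
  refine sum_congr rfl fun j _ => ?_
  rw [show ((t - (t - j) + 1 : ℤ) : ℝ) = j + 1 by push_cast; ring, risingFac_natCast_add_one hν]
  field_simp [(Real.Gamma_pos_of_pos hν).ne']

theorem fracSum_add (f g : ℤ → ℝ) : fracSum ν a (f + g) = fracSum ν a f + fracSum ν a g := by
  ext t
  simp only [fracSum, Pi.add_apply, mul_add, sum_add_distrib]

theorem fracSum_congr {f g : ℤ → ℝ} {t : ℤ} (h : ∀ s ∈ Icc a t, f s = g s) :
    fracSum ν a f t = fracSum ν a g t :=
  sum_congr rfl fun s hs => by rw [h s hs]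

theorem fracSum_fracSum {μ : ℝ} (hμ : 0 < μ) (hν : 0 < ν) (g : ℤ → ℝ) :
    fracSum μ a (fracSum ν a g) = fracSum (μ + ν) a g := by
  ext t
  set N := (t + 1 - a).toNat
  have inner : ∀ j ∈ range N, fracSum ν a g (t - j) =
      ∑ i ∈ range (N - j), Ring.multichoose ν i * g (t - (j + i : ℕ)) := by
    intro j hj
    rw [fracSum_eq_sum_range hν, show (t - j + 1 - a).toNat = N - j by simp at hj; omega]
    simp only [Nat.cast_add, sub_sub]
  rw [fracSum_eq_sum_range hμ, fracSum_eq_sum_range (add_pos hμ hν), sum_congr rfl fun j hj => by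
    rw [inner j hj]]
  simp_rw [mul_sum]
  rw [← sum_range_diag_flip N fun j i =>
    Ring.multichoose μ j * (Ring.multichoose ν i * g (t - (j + i : ℕ)))]
  refine sum_congr rfl fun k _ => ?_
  rw [Ring.multichoose_add, Nat.sum_antidiagonal_eq_sum_range_succ
    (fun i j => Ring.multichoose μ i * Ring.multichoose ν j), sum_mul]
  refine sum_congr rfl fun j hj => ?_
  rw [Nat.add_sub_cancel' (by simp at hj; omega)]
  ring

theorem fracSum_const (hν : 0 < ν) (c : ℝ) {t : ℤ} (ht : a ≤ t) :
    fracSum ν a (fun _ => c) t = risingFac ((t + 1 - a : ℤ) : ℝ) ν / Real.Gamma (ν + 1) * c := by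
  obtain ⟨n, hn⟩ : ∃ n : ℕ, t + 1 - a = n + 1 := ⟨(t - a).toNat, by omega⟩
  have hsum : ∑ j ∈ range (n + 1), Ring.multichoose ν j = Ring.multichoose (ν + 1) n := by
    rw [Ring.multichoose_add, Nat.sum_antidiagonal_eq_sum_range_succ
      (fun i j => Ring.multichoose ν i * Ring.multichoose (1 : ℝ) j)]
    simp only [Ring.multichoose_one, mul_one]
  have hrising : risingFac (n + 1) ν = Real.Gamma (ν + 1) * Ring.multichoose (ν + 1) n := by
    rw [← risingFac_natCast_add_one (by positivity), add_sub_cancel_right]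
  rw [fracSum_eq_sum_range hν, ← sum_mul, hn, show (n + 1 : ℤ).toNat = n + 1 by omega, hsum]
  push_cast
  rw [hrising, mul_div_cancel_left₀ _ (Real.Gamma_pos_of_pos (by positivity)).ne']

theorem fracSum_one_nabla (g : ℤ → ℝ) {t : ℤ} (ht : a ≤ t + 1) :
    fracSum 1 a (nabla g) t = g t - g (a - 1) := by
  rw [fracSum_eq_sum_range one_pos]
  simp only [Ring.multichoose_one, one_mul, nabla]
  have := sum_range_sub' (fun j : ℕ => g (t - j)) (t + 1 - a).toNat
  simp only [Nat.cast_add, Nat.cast_one, ← sub_sub] at this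
  rw [this, show t - ((t + 1 - a).toNat : ℤ) = a - 1 by omega, Nat.cast_zero, sub_zero]

end FracSum

/-- `a < t` is needed: `risingFac 0 0 = Γ 0 / Γ 0 = 0`, so the formula fails at `t = a`. -/
theorem nabla_taylor (f : ℤ → ℝ) (a : ℤ) {m : ℕ} (hm : 1 ≤ m) {t : ℤ} (ht : a < t) :
    f t = ∑ k ∈ range m, risingFac ((t - a : ℤ) : ℝ) k / k ! * nabla^[k] f a +
      fracSum m (a + 1) (nabla^[m] f) t := by
  have hta : ((t + 1 - (a + 1) : ℤ) : ℝ) = ((t - a : ℤ) : ℝ) := by push_cast; ring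
  induction m, hm using Nat.le_induction with
  | base =>
    rw [sum_range_one, Nat.cast_one, Function.iterate_one, fracSum_one_nabla _ (by omega),
      add_sub_cancel_right, Nat.cast_zero, risingFac_zero_right (by exact_mod_cast sub_pos.2 ht)]
    simp
  | succ m hm ih =>
    have hpos : (0 : ℝ) < m := by exact_mod_cast hm
    have hstep : fracSum m (a + 1) (nabla^[m] f) t =
        risingFac ((t - a : ℤ) : ℝ) m / m ! * nabla^[m] f a +
          fracSum (m + 1 : ℕ) (a + 1) (nabla^[m + 1] f) t := by
      rw [fracSum_congr (g := (fun _ => nabla^[m] f a) + fracSum 1 (a + 1) (nabla^[m + 1] f)),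
        fracSum_add, Pi.add_apply, fracSum_const hpos _ (by omega), fracSum_fracSum hpos one_pos,
        hta, Real.Gamma_nat_eq_factorial, Nat.cast_succ]
      intro s hs
      rw [Pi.add_apply, Function.iterate_succ_apply', fracSum_one_nabla _ (by simp at hs; omega),
        add_sub_cancel_right]
      ring
    rw [ih, hstep, sum_range_succ, add_assoc]

theorem discrete_nabla_fractional_taylor_general
    (f : ℤ → ℝ) (a : ℤ) (μ : ℝ) (hμ : 0 < μ)
    (m : ℕ) (hm : m = ⌈μ⌉₊) (hm2 : μ < m)
    (t : ℤ) (ht : a + m ≤ t) :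
    f t = (∑ k ∈ Finset.range m,
        risingFac ((t - a : ℤ) : ℝ) k / (Nat.factorial k) * nabla^[k] f a) +
      (1 / Real.Gamma μ) * ∑ τ ∈ Finset.Icc (a + 1) t,
        risingFac ((t - τ + 1 : ℤ) : ℝ) (μ - 1) * caputoNabla μ (a + 1) f τ := by
  have hm_pos : 0 < m := by exact_mod_cast hμ.trans hm2
  have hremainder : (1 / Real.Gamma μ) * ∑ τ ∈ Icc (a + 1) t,
      risingFac ((t - τ + 1 : ℤ) : ℝ) (μ - 1) * caputoNabla μ (a + 1) f τ =
        fracSum μ (a + 1) (caputoNabla μ (a + 1) f) t := by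
    rw [fracSum, mul_sum]
    exact sum_congr rfl fun τ _ => by ring
  rw [hremainder, caputoNabla, ← hm, fracSum_fracSum hμ (sub_pos.2 hm2), add_sub_cancel]
  exact nabla_taylor f a hm_pos (by omega)

/-- Discrete backward fractional Taylor formula. -/
theorem discrete_nabla_fractional_taylor
    (f : ℤ → ℝ) (a : ℤ) (μ : ℝ) (hμ : 0 < μ) (hμint : ∀ n : ℤ, μ ≠ n)
    (m : ℕ) (hm : m = ⌈μ⌉₊) (hm1 : (m : ℝ) - 1 < μ) (hm2 : μ < m)
    (t : ℤ) (ht : a + m ≤ t) :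
    f t = (∑ k ∈ Finset.range m,
        risingFac ((t - a : ℤ) : ℝ) k / (Nat.factorial k) * nabla^[k] f a) +
      (1 / Real.Gamma μ) * ∑ τ ∈ Finset.Icc (a + 1) t,
        risingFac ((t - τ + 1 : ℤ) : ℝ) (μ - 1) * caputoNabla μ (a + 1) f τ :=
  discrete_nabla_fractional_taylor_general f a μ hμ m hm hm2 t ht
end

section
/- Let p ∈ ℕ and ν > p, and let a ∈ ℕ. Then for every real valued function f defined on ℕ_a = {a, a+1, ...} and every t ∈ ℕ_a: ∇^p(∇_a^{−ν} f(t)) = ∇_a^{−(ν−p)} f(t). -/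
open Finset

/-!
Since `Γ(μ) = (μ - 1) Γ(μ - 1)`, the kernel `(t - s + 1)^{↑(μ-1)} / Γ(μ)` of `∇_a^{-μ}` has backward
difference in `t` equal to the kernel of `∇_a^{-(μ-1)}`, by the power rule
`(u + 1)^{↑α} - u^{↑α} = α (u + 1)^{↑(α-1)}`. The new top term `s = t` of the sum has kernel value
`1^{↑(μ-1)} / Γ(μ) = 1` for every order `μ`, so `∇ ∇_a^{-μ} = ∇_a^{-(μ-1)}` whenever `μ > 1`, and the
theorem follows by induction on `p`.
-/

lemma risingFac_one_left (α : ℝ) : risingFac 1 α = Real.Gamma (1 + α) := by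
  simp [risingFac]

lemma risingFac_add_one_sub_risingFac {u α : ℝ} (hu : 0 < u) (huα : u + α ≠ 0) :
    risingFac (u + 1) α - risingFac u α = α * risingFac (u + 1) (α - 1) := by
  have hΓu : Real.Gamma u ≠ 0 := (Real.Gamma_pos_of_pos hu).ne'
  have hΓα : Real.Gamma (u + 1 + α) = (u + α) * Real.Gamma (u + α) := by
    rw [add_right_comm, Real.Gamma_add_one huα]
  have hα : u + 1 + (α - 1) = u + α := by ring
  simp only [risingFac, hΓα, hα, Real.Gamma_add_one hu.ne']
  field_simp
  ring

lemma nabla_fracSum (μ : ℝ) (hμ : 1 < μ) (a : ℤ) (f : ℤ → ℝ) :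
    nabla (fracSum μ a f) = fracSum (μ - 1) a f := by
  funext t
  have hΓ : Real.Gamma μ = (μ - 1) * Real.Gamma (μ - 1) := by
    simpa using Real.Gamma_add_one (s := μ - 1) (by linarith)
  have hΓ_pos : 0 < Real.Gamma (μ - 1) := Real.Gamma_pos_of_pos (by linarith)
  have top_term (ν : ℝ) (hν : Real.Gamma ν ≠ 0) :
      risingFac ((t - t + 1 : ℤ) : ℝ) (ν - 1) / Real.Gamma ν * f t = f t := by
    simp [risingFac_one_left, hν]
  have kernel_diff (s : ℤ) (hs : s ≤ t - 1) :
      risingFac ((t - s + 1 : ℤ) : ℝ) (μ - 1) / Real.Gamma μ * f s -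
          risingFac ((t - 1 - s + 1 : ℤ) : ℝ) (μ - 1) / Real.Gamma μ * f s =
        risingFac ((t - s + 1 : ℤ) : ℝ) (μ - 1 - 1) / Real.Gamma (μ - 1) * f s := by
    have hu : (1 : ℝ) ≤ ((t - s : ℤ) : ℝ) := by exact_mod_cast (by omega : 1 ≤ t - s)
    have key := risingFac_add_one_sub_risingFac (α := μ - 1) (by linarith) (by linarith)
    push_cast at key ⊢
    rw [show (t : ℝ) - 1 - s + 1 = t - s by ring, ← sub_mul, ← sub_div, key, hΓ]
    field_simp [(by linarith : μ - 1 ≠ 0)]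
  by_cases hat : a ≤ t
  · rw [nabla, fracSum, fracSum, fracSum, ← Finset.insert_Icc_sub_one_right_eq_Icc hat,
      Finset.sum_insert (by simp), Finset.sum_insert (by simp), top_term μ (by positivity),
      top_term (μ - 1) hΓ_pos.ne', add_sub_assoc, ← Finset.sum_sub_distrib]
    exact congrArg _ (Finset.sum_congr rfl fun s hs => kernel_diff s (Finset.mem_Icc.mp hs).2)
  · have hempty (b : ℤ) (hb : b ≤ t) : Finset.Icc a b = ∅ := Finset.Icc_eq_empty (by omega)
    simp [nabla, fracSum, hempty t le_rfl, hempty (t - 1) (by omega)]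

lemma iterate_nabla_fracSum (p : ℕ) (ν : ℝ) (hpν : (p : ℝ) < ν) (a : ℤ) (f : ℤ → ℝ) :
    nabla^[p] (fracSum ν a f) = fracSum (ν - p) a f := by
  induction p generalizing ν with
  | zero => simp
  | succ n ih =>
    push_cast at hpν
    rw [Function.iterate_succ_apply, nabla_fracSum ν (by linarith) a f, ih (ν - 1) (by linarith),
      sub_sub, Nat.cast_succ, add_comm]

theorem nabla_pow_fracSum_general (p : ℕ) (ν : ℝ) (hpν : (p : ℝ) < ν) (a : ℕ)
    (f : ℤ → ℝ) (t : ℤ) :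
    nabla^[p] (fracSum ν a f) t = fracSum (ν - p) a f t :=
  congrFun (iterate_nabla_fracSum p ν hpν a f) t

/-- The p-th nabla difference of a fractional sum lowers the order by p. -/
theorem nabla_pow_fracSum (p : ℕ) (ν : ℝ) (hpν : (p : ℝ) < ν) (a : ℕ)
    (f : ℤ → ℝ) (t : ℤ) (ht : (a : ℤ) ≤ t) :
    nabla^[p] (fracSum ν a f) t = fracSum (ν - p) a f t :=
  nabla_pow_fracSum_general p ν hpν a f t
end

section
/- Let f : ℤ → ℝ be a function and let a ∈ ℤ₊. Let μ > 0 be non-integer with m − 1 < μ < m, where m = ⌈μ⌉, and let p ∈ ℕ with μ > p. Then for all t ∈ ℕ with t ≥ a + m: | ∇^p f(t) − Σ_{k=p}^{m−1} ((t−a)^{↑(k−p)}/(k−p)!) · ∇^k f(a) | ≤ ((t−a)^{↑(μ−p)}/Γ(μ−p+1)) · max_{τ ∈ {a+1,...,t}} |∇_{(a+1)*}^{μ} f(τ)|. -/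
/-!
Put `t = a + 1 + N` and encode a function read from `a + 1` on by its generating function. Up to a
boundary value, the backward difference becomes multiplication by `1 - X`, and the nabla sum of
order `ν` becomes multiplication by `(1 - X)^(-ν)`, whose coefficients `multichoose ν k` are the
kernel `(k + 1)^{↑(ν-1)} / Γ(ν)`. The Taylor formula of integer order `m - p` for `∇^p f` then has
remainder `(1 - X)^(-(m-p)) ∇^m f`, and the Chu–Vandermonde identity
`(1 - X)^(-(m-p)) = (1 - X)^(-(μ-p)) (1 - X)^(-(m-μ))` rewrites it as the nabla sum of order
`μ - p` of the Caputo difference. Its weights are positive and add up to the `X^N`-coefficient of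
`(1 - X)^(-(μ-p+1))`, which is `(t - a)^{↑(μ-p)} / Γ(μ - p + 1)`.
-/

open Finset

open PowerSeries

namespace Ring

theorem multichoose_add_eq_sum_antidiagonal {R : Type*} [CommRing R] [BinomialRing R]
    (r s : R) (k : ℕ) :
    multichoose (r + s) k = ∑ ij ∈ antidiagonal k, multichoose r ij.1 * multichoose s ij.2 := by
  have h (x : R) (n : ℕ) : multichoose x n = Int.negOnePow n • choose (-x) n := by
    rw [choose_neg', smul_smul, ← Int.negOnePow_add, Int.negOnePow_even _ (by simp), one_smul]
  rw [h, neg_add, add_choose_eq _ (Commute.all _ _), smul_sum]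
  refine sum_congr rfl fun ij hij => ?_
  rw [h, h, smul_mul_smul_comm, ← Int.negOnePow_add, ← Nat.cast_add, mem_antidiagonal.mp hij]

end Ring

namespace Real

theorem multichoose_eq_ascPochhammer_div (ν : ℝ) (k : ℕ) :
    Ring.multichoose ν k = (ascPochhammer ℝ k).eval ν / k.factorial := by
  rw [eq_div_iff (by positivity), mul_comm, ← nsmul_eq_mul,
    Ring.factorial_nsmul_multichoose_eq_ascPochhammer, Polynomial.ascPochhammer_smeval_eq_eval]

theorem multichoose_pos {ν : ℝ} (hν : 0 < ν) (k : ℕ) : 0 < Ring.multichoose ν k := by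
  rw [multichoose_eq_ascPochhammer_div]
  exact div_pos (ascPochhammer_pos k ν hν) (by positivity)

theorem Gamma_add_nat_eq_ascPochhammer_mul {ν : ℝ} (hν : 0 < ν) (n : ℕ) :
    Gamma (ν + n) = (ascPochhammer ℝ n).eval ν * Gamma ν := by
  induction n with
  | zero => simp
  | succ n ih =>
    rw [Nat.cast_succ, ← add_assoc, Gamma_add_one (by positivity), ih, ascPochhammer_succ_eval]
    ring

end Real

theorem multichoose_eq_risingFac_div_Gamma {ν : ℝ} (hν : 0 < ν) (j : ℕ) :
    Ring.multichoose ν j = risingFac (j + 1) (ν - 1) / Real.Gamma ν := by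
  have hΓ : Real.Gamma ν ≠ 0 := (Real.Gamma_pos_of_pos hν).ne'
  rw [risingFac, show (j : ℝ) + 1 + (ν - 1) = ν + j by ring,
    Real.Gamma_add_nat_eq_ascPochhammer_mul hν, Real.Gamma_nat_eq_factorial,
    Real.multichoose_eq_ascPochhammer_div]
  field_simp

theorem risingFac_div_factorial (j k : ℕ) :
    risingFac (j + 1) k / k.factorial = Ring.multichoose ((k : ℝ) + 1) j := by
  rw [multichoose_eq_risingFac_div_Gamma (by positivity), add_sub_cancel_right,
    Real.Gamma_nat_eq_factorial]

/-- `(1 - X) ^ (-ν)`. -/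
noncomputable def negBinomialSeries {R : Type*} [CommRing R] [BinomialRing R] (ν : R) : R⟦X⟧ :=
  PowerSeries.mk (Ring.multichoose ν)

section negBinomialSeries

variable {R : Type*} [CommRing R] [BinomialRing R]

theorem negBinomialSeries_add (r s : R) :
    negBinomialSeries (r + s) = negBinomialSeries r * negBinomialSeries s := by
  ext k
  simp only [negBinomialSeries, coeff_mk, coeff_mul, Ring.multichoose_add_eq_sum_antidiagonal]

theorem negBinomialSeries_zero : negBinomialSeries (0 : R) = 1 := by
  ext (_ | k) <;> simp [negBinomialSeries]

theorem negBinomialSeries_one_mul_one_sub_X : negBinomialSeries (1 : R) * (1 - X) = 1 := by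
  have h : negBinomialSeries (1 : R) = PowerSeries.mk 1 := by
    ext k
    simp [negBinomialSeries]
  rw [h, mk_one_mul_one_sub_eq_one]

end negBinomialSeries

theorem abs_coeff_negBinomialSeries_mul_le {ν : ℝ} (hν : 0 < ν) {c : ℕ → ℝ} {B : ℝ} {N : ℕ}
    (hc : ∀ i ≤ N, |c i| ≤ B) :
    |coeff N (negBinomialSeries ν * PowerSeries.mk c)| ≤ Ring.multichoose (ν + 1) N * B := by
  have hpos := Real.multichoose_pos hν
  calc |coeff N (negBinomialSeries ν * PowerSeries.mk c)|
      = |∑ ij ∈ antidiagonal N, Ring.multichoose ν ij.1 * c ij.2| := by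
        simp only [coeff_mul, negBinomialSeries, coeff_mk]
    _ ≤ ∑ ij ∈ antidiagonal N, Ring.multichoose ν ij.1 * B := by
        refine (abs_sum_le_sum_abs _ _).trans (sum_le_sum fun ij hij => ?_)
        rw [abs_mul, abs_of_pos (hpos _)]
        exact mul_le_mul_of_nonneg_left (hc _ (HasAntidiagonal.antidiagonal.snd_le hij)) (hpos _).le
    _ = Ring.multichoose (ν + 1) N * B := by
        simp [← sum_mul, Ring.multichoose_add_eq_sum_antidiagonal]

noncomputable def seriesFrom (a : ℤ) (h : ℤ → ℝ) : ℝ⟦X⟧ := PowerSeries.mk fun j => h (a + j)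

theorem fracSum_add_nat_eq_coeff {ν : ℝ} (hν : 0 < ν) (a : ℤ) (h : ℤ → ℝ) (i : ℕ) :
    fracSum ν a h (a + i) = coeff i (negBinomialSeries ν * seriesFrom a h) := by
  rw [fracSum, coeff_mul]
  refine sum_nbij' (fun s => ((a + i - s).toNat, (s - a).toNat)) (fun jl => a + jl.2)
    ?_ ?_ ?_ ?_ ?_ <;> simp only [mem_Icc, HasAntidiagonal.mem_antidiagonal, Prod.ext_iff]
  · omega
  · omega
  · omega
  · omega
  · intro s hs
    have hcast : (((a + i - s).toNat : ℕ) : ℝ) = ((a + i - s : ℤ) : ℝ) := by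
      exact_mod_cast Int.toNat_of_nonneg (by omega : 0 ≤ a + i - s)
    rw [negBinomialSeries, seriesFrom, coeff_mk, coeff_mk, multichoose_eq_risingFac_div_Gamma hν,
      Int.toNat_of_nonneg (by omega : 0 ≤ s - a), add_sub_cancel, hcast]
    push_cast
    ring_nf

theorem one_sub_X_mul_seriesFrom (a : ℤ) (h : ℤ → ℝ) :
    (1 - X) * seriesFrom (a + 1) h = seriesFrom (a + 1) (nabla h) + C (h a) := by
  ext (_ | j)
  · simp [seriesFrom, nabla]
  · simp only [sub_mul, one_mul, map_sub, map_add, coeff_succ_X_mul, seriesFrom, coeff_mk,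
      coeff_C, nabla, Nat.succ_ne_zero, if_false, add_zero]
    congr 2
    push_cast
    ring

theorem seriesFrom_eq_taylor (a : ℤ) (g : ℤ → ℝ) (M : ℕ) :
    seriesFrom (a + 1) g = ∑ k ∈ range M, C (nabla^[k] g a) * negBinomialSeries ((k : ℝ) + 1) +
      negBinomialSeries (M : ℝ) * seriesFrom (a + 1) (nabla^[M] g) := by
  induction M with
  | zero => simp [negBinomialSeries_zero]
  | succ M ih =>
    have hstep : seriesFrom (a + 1) (nabla^[M] g) = negBinomialSeries 1 *
        (seriesFrom (a + 1) (nabla^[M + 1] g) + C (nabla^[M] g a)) := by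
      rw [Function.iterate_succ_apply', ← one_sub_X_mul_seriesFrom, ← mul_assoc,
        negBinomialSeries_one_mul_one_sub_X, one_mul]
    rw [ih, hstep, sum_range_succ, Nat.cast_succ, negBinomialSeries_add]
    ring

theorem nabla_taylor_s9 (a : ℤ) (g : ℤ → ℝ) (M N : ℕ) :
    g (a + 1 + N) = ∑ k ∈ range M, risingFac (N + 1) k / k.factorial * nabla^[k] g a +
      coeff N (negBinomialSeries (M : ℝ) * seriesFrom (a + 1) (nabla^[M] g)) := by
  have h := congrArg (coeff N) (seriesFrom_eq_taylor a g M)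
  simpa [seriesFrom, negBinomialSeries, risingFac_div_factorial, mul_comm] using h

theorem nabla_iterate_taylor (f : ℤ → ℝ) (a : ℤ) {p m : ℕ} (hpm : p < m) (N : ℕ) :
    nabla^[p] f (a + 1 + N) - ∑ k ∈ Icc p (m - 1),
        risingFac (N + 1) ((k - p : ℕ)) / (k - p).factorial * nabla^[k] f a =
      coeff N (negBinomialSeries ((m - p : ℕ) : ℝ) * seriesFrom (a + 1) (nabla^[m] f)) := by
  have hsum : ∑ k ∈ Icc p (m - 1), risingFac (N + 1) ((k - p : ℕ)) / (k - p).factorial *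
      nabla^[k] f a = ∑ k ∈ range (m - p), risingFac (N + 1) k / k.factorial *
      nabla^[k] (nabla^[p] f) a := by
    have hm : ¬IsMin m := by simp only [isMin_iff_eq_bot, Nat.bot_eq_zero]; omega
    rw [Icc_sub_one_right_eq_Ico_of_not_isMin hm, sum_Ico_eq_sum_range]
    refine sum_congr rfl fun k _ => ?_
    rw [Nat.add_sub_cancel_left, Nat.add_comm p k, Function.iterate_add_apply]
  rw [hsum, nabla_taylor_s9 a (nabla^[p] f) (m - p) N, ← Function.iterate_add_apply,
    Nat.sub_add_cancel hpm.le, add_sub_cancel_left]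

theorem mk_caputoNabla_eq {μ : ℝ} (hμ : μ < ⌈μ⌉₊) (a : ℤ) (f : ℤ → ℝ) :
    PowerSeries.mk (fun i => caputoNabla μ a f (a + i)) =
      negBinomialSeries ((⌈μ⌉₊ : ℝ) - μ) * seriesFrom a (nabla^[⌈μ⌉₊] f) := by
  ext i
  rw [coeff_mk, ← fracSum_add_nat_eq_coeff (sub_pos.mpr hμ)]
  rfl

theorem discrete_nabla_fractional_taylor_extended_remainder_bound_general
    (f : ℤ → ℝ) (a : ℕ) (μ : ℝ)
    (m : ℕ) (hm : m = ⌈μ⌉₊) (hm2 : μ < m)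
    (p : ℕ) (hp : (p : ℝ) < μ)
    (t : ℤ) (ht : (a : ℤ) + m ≤ t) :
    |nabla^[p] f t - ∑ k ∈ Finset.Icc p (m - 1),
        risingFac ((t - a : ℤ) : ℝ) ((k - p : ℕ)) / (Nat.factorial (k - p)) *
          nabla^[k] f a| ≤
      risingFac ((t - a : ℤ) : ℝ) (μ - p) / Real.Gamma (μ - p + 1) *
        sSup ((fun τ : ℤ => |caputoNabla μ ((a : ℤ) + 1) f τ|) ''
          Set.Icc ((a : ℤ) + 1) t) := by
  subst hm
  have hpm : p < ⌈μ⌉₊ := by exact_mod_cast hp.trans hm2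
  obtain ⟨N, rfl⟩ : ∃ N : ℕ, t = a + 1 + N := ⟨(t - a - 1).toNat, by omega⟩
  have hlen : ((a + 1 + N - a : ℤ) : ℝ) = N + 1 := by push_cast; ring
  have hremainder := nabla_iterate_taylor f a hpm N
  rw [Nat.cast_sub hpm.le, show (⌈μ⌉₊ : ℝ) - p = (μ - p) + (⌈μ⌉₊ - μ) by ring,
    negBinomialSeries_add, mul_assoc, ← mk_caputoNabla_eq hm2] at hremainder
  have hweight : risingFac (N + 1) (μ - p) / Real.Gamma (μ - p + 1) =
      Ring.multichoose (μ - p + 1) N := by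
    rw [multichoose_eq_risingFac_div_Gamma (by linarith), add_sub_cancel_right]
  rw [hlen, hremainder, hweight]
  refine abs_coeff_negBinomialSeries_mul_le (sub_pos.mpr hp) fun i hi => ?_
  exact le_csSup ((Set.finite_Icc _ _).image _).bddAbove ⟨a + 1 + i, ⟨by omega, by omega⟩, rfl⟩

/-- Estimate of the remainder of the extended discrete backward fractional Taylor formula. -/
theorem discrete_nabla_fractional_taylor_extended_remainder_bound
    (f : ℤ → ℝ) (a : ℕ) (μ : ℝ) (hμ : 0 < μ) (hμint : ∀ n : ℤ, μ ≠ n)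
    (m : ℕ) (hm : m = ⌈μ⌉₊) (hm1 : (m : ℝ) - 1 < μ) (hm2 : μ < m)
    (p : ℕ) (hp : (p : ℝ) < μ)
    (t : ℤ) (ht : (a : ℤ) + m ≤ t) :
    |nabla^[p] f t - ∑ k ∈ Finset.Icc p (m - 1),
        risingFac ((t - a : ℤ) : ℝ) ((k - p : ℕ)) / (Nat.factorial (k - p)) *
          nabla^[k] f a| ≤
      risingFac ((t - a : ℤ) : ℝ) (μ - p) / Real.Gamma (μ - p + 1) *
        sSup ((fun τ : ℤ => |caputoNabla μ ((a : ℤ) + 1) f τ|) ''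
          Set.Icc ((a : ℤ) + 1) t) :=
  discrete_nabla_fractional_taylor_extended_remainder_bound_general f a μ m hm hm2 p hp t ht
end
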